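/- arXiv:math/9806096 — 2 statements merged into one kernel-verified Lean document; each statement's English description precedes it below -/
import Mathlib

section
/- Let α be irrational, 0 < α < 1. The map ρ̄ : X → [0,1) sending each Sturmian sequence to its rotation parameter satisfies: if x^{(n)} → x in X and the central coordinates (x^{(n)})₀ eventually equal x₀, then ρ(x^{(n)}) → ρ(x) in ℝ (not merely mod 1); consequently the function t(x) = ρ(x) with values in [0,1) ⊂ ℝ is continuous on X. -/
open Complex Real

private lemma aux_arg_exp {s : ℝ} (h0 : 0 ≤ s) (h1 : s < 1/2) :
    Complex.arg (Complex.exp (2 * Real.pi * Complex.I * s)) = 2 * Real.pi * s ∧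
    Complex.exp (2 * Real.pi * Complex.I * s) ∈ Complex.slitPlane := by
  have hθ0 : 0 ≤ 2 * Real.pi * s := by positivity
  have hθπ : 2 * Real.pi * s < Real.pi := by nlinarith [Real.pi_pos]
  have hrw : (2 * Real.pi * Complex.I * s : ℂ) = ((2 * Real.pi * s : ℝ) : ℂ) * Complex.I := by
    push_cast; ring
  rw [hrw, Complex.exp_mul_I]
  constructor
  · exact_mod_cast Complex.arg_cos_add_sin_mul_I
      ⟨lt_of_lt_of_le (neg_neg_of_pos Real.pi_pos) hθ0, hθπ.le⟩
  · rw [Complex.mem_slitPlane_iff]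
    rcases eq_or_lt_of_le hθ0 with h | h
    · left; simp [← h]
    · right
      have : Real.sin (2 * Real.pi * s) > 0 := Real.sin_pos_of_pos_of_lt_pi h hθπ
      simp only [Complex.add_im, Complex.mul_im, Complex.I_re, Complex.I_im,
        Complex.cos_ofReal_im, Complex.sin_ofReal_re, Complex.sin_ofReal_im,
        mul_one, mul_zero, zero_add, add_zero, ne_eq]
      exact this.ne'

/-- for the Sturmian subshift coding rotation by α via [0,1/2), the lift
t = ρ with values in [0,1) ⊂ ℝ is continuous: if x⁽ⁿ⁾ → x and the central coordinates
eventually agree with x₀, then ρ(x⁽ⁿ⁾) → ρ(x) in ℝ (not merely mod 1); consequently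
ρ is continuous on X. Here continuity mod 1 is expressed via the circle map
x ↦ exp(2πiρ(x)), and the central symbol determines the half-interval containing ρ(x). -/
theorem sturmian_lift_continuous (α : ℝ) (hα : Irrational α) (h0 : 0 < α) (h1 : α < 1)
    (X : Set (ℤ → Bool)) (ρ : X → ℝ)
    (hρ01 : ∀ x, ρ x ∈ Set.Ico (0:ℝ) 1)
    (hcirc : Continuous fun x : X => Complex.exp (2 * Real.pi * Complex.I * ρ x))
    (hcode : ∀ x : X, (x : ℤ → Bool) 0 = true ↔ ρ x < 1/2) :
    (∀ (u : ℕ → X) (x : X), Filter.Tendsto u Filter.atTop (nhds x) →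
        (∀ᶠ n in Filter.atTop, (u n : ℤ → Bool) 0 = (x : ℤ → Bool) 0) →
        Filter.Tendsto (fun n => ρ (u n)) Filter.atTop (nhds (ρ x))) ∧
      Continuous ρ := by
  -- the modified map f x = ± exp(2πiρ x) lands in the slit plane, and arg recovers ρ
  set f : X → ℂ := fun x =>
    (if (x : ℤ → Bool) 0 = true then 1 else -1) * Complex.exp (2 * Real.pi * Complex.I * ρ x)
    with hf
  have key : ∀ x : X, f x = Complex.exp (2 * Real.pi * Complex.I *
      (((ρ x - if (x : ℤ → Bool) 0 = true then 0 else 1/2 : ℝ)) : ℂ)) := by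
    intro x
    by_cases h : (x : ℤ → Bool) 0 = true
    · simp [hf, h]
    · simp only [hf, h, Bool.false_eq_true, if_false]
      rw [show (2 * Real.pi * Complex.I * (((ρ x - 1/2 : ℝ)) : ℂ) : ℂ)
          = 2 * Real.pi * Complex.I * ρ x + (-(Real.pi * Complex.I)) by push_cast; ring,
        Complex.exp_add]
      rw [show (-(Real.pi * Complex.I) : ℂ) = -((Real.pi:ℂ) * Complex.I) by norm_num,
        Complex.exp_neg, Complex.exp_pi_mul_I]
      norm_num
  have hmem : ∀ x : X, (0:ℝ) ≤ ρ x - (if (x : ℤ → Bool) 0 = true then 0 else 1/2) ∧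
      ρ x - (if (x : ℤ → Bool) 0 = true then 0 else 1/2) < 1/2 := by
    intro x
    obtain ⟨ha, hb⟩ := hρ01 x
    by_cases h : (x : ℤ → Bool) 0 = true
    · have := (hcode x).mp h
      simp [h]; constructor <;> linarith
    · have : ¬ ρ x < 1/2 := fun hlt => h ((hcode x).mpr hlt)
      simp [h]; constructor <;> linarith
  have hargf : ∀ x : X, Complex.arg (f x)
      = 2 * Real.pi * (ρ x - (if (x : ℤ → Bool) 0 = true then 0 else 1/2)) := by
    intro x
    rw [key x]
    exact (aux_arg_exp (hmem x).1 (hmem x).2).1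
  have hslit : ∀ x : X, f x ∈ Complex.slitPlane := by
    intro x
    rw [key x]
    exact (aux_arg_exp (hmem x).1 (hmem x).2).2
  -- continuity of f
  have hsign : Continuous fun x : X => (if (x : ℤ → Bool) 0 = true then (1:ℂ) else -1) := by
    have h0' : Continuous fun x : X => (x : ℤ → Bool) 0 :=
      (continuous_apply (0:ℤ)).comp continuous_subtype_val
    exact (continuous_of_discreteTopology (f := fun b : Bool => if b = true then (1:ℂ) else -1)).comp h0'
  have hfc : Continuous f := hsign.mul hcirc
  have hargc : Continuous fun x : X => Complex.arg (f x) := by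
    rw [continuous_iff_continuousAt]
    intro x
    exact (Complex.continuousAt_arg (hslit x)).comp hfc.continuousAt
  -- recover ρ
  have hρeq : ρ = fun x : X => Complex.arg (f x) / (2 * Real.pi)
      + (if (x : ℤ → Bool) 0 = true then 0 else 1/2) := by
    funext x
    rw [hargf x]
    field_simp
    ring
  have hoff : Continuous fun x : X => (if (x : ℤ → Bool) 0 = true then (0:ℝ) else 1/2) := by
    have h0' : Continuous fun x : X => (x : ℤ → Bool) 0 :=
      (continuous_apply (0:ℤ)).comp continuous_subtype_val
    exact (continuous_of_discreteTopology (f := fun b : Bool => if b = true then (0:ℝ) else 1/2)).comp h0'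
  have hρc : Continuous ρ := by
    rw [hρeq]
    exact (hargc.div_const _).add hoff
  exact ⟨fun u x hu _ => ((hρc.tendsto x).comp hu), hρc⟩
end

section
/- Given π : X → Y and v : X → ℝ satisfying the cohomological equations S^{n_Y(πx, g(x)+v(x))}(πx) = S^{n_Y(πTx, v(Tx))}(πTx) and v(Tx) − v(x) = g(x) + h(πTx, n_Y(πTx, v(Tx))) − h(πx, n_Y(πx, g(x)+v(x))) for all x ∈ X, the assignment φ[x,s] = [πx,0]·(s + v(x)) is well-defined on the flow under g: if (x,s) ∼ (x',s') in X × ℝ (equivalence generated by (x,g(x)) ≡ (Tx,0)), then [πx,0]·(s+v(x)) = [πx',0]·(s'+v(x')) in the flow under h. -/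
/-- The ergodic-sum cocycle of g along the T-orbit:
cocycle T g x n = sum_{k=0}^{n-1} g (T^k x) for n > 0, 0 for n = 0,
and -sum_{k=n}^{-1} g (T^k x) for n < 0. -/
noncomputable def cocycle {X : Type*} (T : Equiv.Perm X) (g : X → ℝ) (x : X) (n : ℤ) : ℝ :=
  if 0 ≤ n then ∑ k ∈ Finset.range n.toNat, g ((T ^ (k : ℤ)) x)
  else - ∑ k ∈ Finset.range (-n).toNat, g ((T ^ (n + (k : ℤ))) x)

/-- The ℝ-action on the flow under h: [y,t]·u = [S^{n_Y(y,t+u)} y, t+u − h(y, n_Y(y,t+u))]. -/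
noncomputable def flowActY {Y : Type*} (S : Equiv.Perm Y) (h : Y → ℝ) (nY : Y → ℝ → ℤ)
    (p : Y × ℝ) (u : ℝ) : Y × ℝ :=
  ((S ^ nY p.1 (p.2 + u)) p.1, p.2 + u - cocycle S h p.1 (nY p.1 (p.2 + u)))

lemma pow_comp {X : Type*} (T : Equiv.Perm X) (a b : ℤ) (x : X) :
    (T ^ a) ((T ^ b) x) = (T ^ (a + b)) x := by
  rw [← Equiv.Perm.mul_apply, ← zpow_add]

lemma coc_zero {X : Type*} (T : Equiv.Perm X) (g : X → ℝ) (x : X) :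
    cocycle T g x 0 = 0 := by simp [cocycle]

lemma coc_succ {X : Type*} (T : Equiv.Perm X) (g : X → ℝ) (x : X) (n : ℤ) :
    cocycle T g x (n + 1) = cocycle T g x n + g ((T ^ n) x) := by
  rcases le_or_gt 0 n with hn | hn
  · have h1 : (0:ℤ) ≤ n + 1 := by omega
    have h2 : (n+1).toNat = n.toNat + 1 := by omega
    have h3 : ((n.toNat : ℤ)) = n := by omega
    simp only [cocycle, if_pos hn, if_pos h1, h2, Finset.sum_range_succ, h3]
  · rcases eq_or_lt_of_le (by omega : n ≤ -1) with hn1 | hn1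
    · subst_eqs
      norm_num [cocycle]
    · have h1 : ¬ (0:ℤ) ≤ n + 1 := by omega
      have h0 : ¬ (0:ℤ) ≤ n := by omega
      have h2 : (-n).toNat = (-(n+1)).toNat + 1 := by omega
      simp only [cocycle, if_neg h1, if_neg h0, h2, Finset.sum_range_succ']
      push_cast
      ring_nf
      -- fix

lemma coc_add {X : Type*} (T : Equiv.Perm X) (g : X → ℝ) (x : X) (a b : ℤ) :
    cocycle T g x (a + b) = cocycle T g x a + cocycle T g ((T ^ a) x) b := by
  induction b using Int.induction_on with
  | zero => simp [coc_zero]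
  | succ b ih =>
      have e1 : a + ((b : ℤ) + 1) = (a + b) + 1 := by ring
      rw [e1, coc_succ, ih, coc_succ, pow_comp]
      ring_nf
  | pred b ih =>
      have e1 : a + (-(b : ℤ)) = (a + (-b - 1)) + 1 := by ring
      have e2 : (-(b:ℤ)) = (-b - 1) + 1 := by ring
      rw [e1, coc_succ] at ih
      rw [e2, coc_succ, pow_comp] at ih
      have e3 : (-(b:ℤ) - 1 + a) = a + (-b - 1) := by ring
      rw [e3] at ih
      have e4 : a + (-(b:ℤ) - 1 + 1 - 1) = a + (-b - 1) := by ring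
      rw [e4] at ih
      linarith

lemma step_lemma {X Y : Type*} (T : Equiv.Perm X) (S : Equiv.Perm Y)
    (g : X → ℝ) (h : Y → ℝ) (nY : Y → ℝ → ℤ) (π : X → Y) (v : X → ℝ)
    (hc1 : ∀ x, (S ^ nY (π x) (g x + v x)) (π x)
      = (S ^ nY (π (T x)) (v (T x))) (π (T x)))
    (hc2 : ∀ x, v (T x) - v x
      = g x + cocycle S h (π (T x)) (nY (π (T x)) (v (T x)))
        - cocycle S h (π x) (nY (π x) (g x + v x)))
    (x : X) :
    ∃ N : ℤ, π (T x) = (S ^ N) (π x) ∧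
      v (T x) - g x = v x - cocycle S h (π x) N := by
  set k := nY (π x) (g x + v x) with hk
  set k' := nY (π (T x)) (v (T x)) with hk'
  have hbase : π (T x) = (S ^ (k - k')) (π x) := by
    have h1 := congrArg (S ^ (-k')) (hc1 x)
    rw [pow_comp, pow_comp] at h1
    have e1 : -k' + k = k - k' := by ring
    have e2 : -k' + k' = 0 := by ring
    rw [e1, e2] at h1
    simpa using h1.symm
  refine ⟨k - k', hbase, ?_⟩
  have hadd := coc_add S h (π x) (k - k') k'
  have e : k - k' + k' = k := by ring
  rw [e, ← hbase] at hadd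
  have h2 := hc2 x
  linarith

lemma claim_lemma {X Y : Type*} (T : Equiv.Perm X) (S : Equiv.Perm Y)
    (g : X → ℝ) (h : Y → ℝ) (nY : Y → ℝ → ℤ) (π : X → Y) (v : X → ℝ)
    (hc1 : ∀ x, (S ^ nY (π x) (g x + v x)) (π x)
      = (S ^ nY (π (T x)) (v (T x))) (π (T x)))
    (hc2 : ∀ x, v (T x) - v x
      = g x + cocycle S h (π (T x)) (nY (π (T x)) (v (T x)))
        - cocycle S h (π x) (nY (π x) (g x + v x)))
    (x : X) (n : ℤ) :
    ∃ N : ℤ, π ((T ^ n) x) = (S ^ N) (π x) ∧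
      v ((T ^ n) x) - cocycle T g x n = v x - cocycle S h (π x) N := by
  induction n using Int.induction_on with
  | zero => exact ⟨0, by simp, by simp [coc_zero]⟩
  | succ n ih =>
      obtain ⟨N, hN1, hN2⟩ := ih
      obtain ⟨N', hN'1, hN'2⟩ := step_lemma T S g h nY π v hc1 hc2 ((T ^ (n:ℤ)) x)
      have hTx : (T ^ ((n:ℤ) + 1)) x = T ((T ^ (n:ℤ)) x) := by
        have h0 := pow_comp T 1 n x
        rw [zpow_one] at h0
        rw [show (n:ℤ) + 1 = 1 + n by ring, ← h0]
      refine ⟨N + N', ?_, ?_⟩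
      · rw [hTx, hN'1, hN1, pow_comp]
        congr 1
        ring
      · have hcs := coc_succ T g x n
        have hadd := coc_add S h (π x) N N'
        rw [← hN1] at hadd
        rw [hTx]
        linarith
  | pred n ih =>
      obtain ⟨N, hN1, hN2⟩ := ih
      obtain ⟨N', hN'1, hN'2⟩ := step_lemma T S g h nY π v hc1 hc2 ((T ^ (-(n:ℤ) - 1)) x)
      have hTx : T ((T ^ (-(n:ℤ) - 1)) x) = (T ^ (-(n:ℤ))) x := by
        have := pow_comp T 1 (-(n:ℤ) - 1) x
        rw [zpow_one] at this
        rw [this]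
        congr 1
        ring
      rw [hTx] at hN'1 hN'2
      have hbase : π ((T ^ (-(n:ℤ) - 1)) x) = (S ^ (N - N')) (π x) := by
        have h1 := congrArg (S ^ (-N')) hN'1
        rw [pow_comp] at h1
        have h2 : (S ^ (-N')) (π ((T ^ (-(n:ℤ))) x)) = (S ^ (N - N')) (π x) := by
          rw [hN1, pow_comp]
          congr 1
          ring
        rw [h2] at h1
        simpa using h1.symm
      refine ⟨N - N', hbase, ?_⟩
      have hcs := coc_succ T g x (-(n:ℤ) - 1)
      have e : -(n:ℤ) - 1 + 1 = -n := by ring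
      rw [e] at hcs
      have hadd := coc_add S h (π x) (N - N') N'
      have e2 : N - N' + N' = N := by ring
      rw [e2, ← hbase] at hadd
      linarith

/-- if (π, v) satisfies the cohomological equations, then
φ[x,s] = [πx,0]·(s+v(x)) is well-defined: if (x,s) ∼ (x′,s′) in the flow under g
(i.e. x′ = T^n x and s′ = s − g(x,n) for some n), then [πx,0]·(s+v(x)) and
[πx′,0]·(s′+v(x′)) are equivalent in the flow under h. -/
theorem code_well_defined {X Y : Type*} (T : Equiv.Perm X) (S : Equiv.Perm Y)
    (g : X → ℝ) (hgpos : ∀ x, 0 < g x) (h : Y → ℝ) (hhpos : ∀ y, 0 < h y)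
    (nY : Y → ℝ → ℤ)
    (hnY : ∀ y s, cocycle S h y (nY y s) ≤ s ∧ s < cocycle S h y (nY y s + 1))
    (π : X → Y) (v : X → ℝ)
    (hc1 : ∀ x, (S ^ nY (π x) (g x + v x)) (π x)
      = (S ^ nY (π (T x)) (v (T x))) (π (T x)))
    (hc2 : ∀ x, v (T x) - v x
      = g x + cocycle S h (π (T x)) (nY (π (T x)) (v (T x)))
        - cocycle S h (π x) (nY (π x) (g x + v x))) :
    ∀ p q : X × ℝ,
      (∃ n : ℤ, q.1 = (T ^ n) p.1 ∧ q.2 = p.2 - cocycle T g p.1 n) →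
      ∃ n : ℤ,
        (flowActY S h nY (π q.1, 0) (q.2 + v q.1)).1
          = (S ^ n) (flowActY S h nY (π p.1, 0) (p.2 + v p.1)).1 ∧
        (flowActY S h nY (π q.1, 0) (q.2 + v q.1)).2
          = (flowActY S h nY (π p.1, 0) (p.2 + v p.1)).2
            - cocycle S h (flowActY S h nY (π p.1, 0) (p.2 + v p.1)).1 n := by
  rintro p q ⟨n, hq1, hq2⟩
  obtain ⟨N, hN1, hN2⟩ := claim_lemma T S g h nY π v hc1 hc2 p.1 n
  rw [← hq1] at hN1 hN2
  simp only [flowActY, zero_add]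
  set tp := p.2 + v p.1 with htp
  have htq : q.2 + v q.1 = tp - cocycle S h (π p.1) N := by rw [hq2] at *; linarith
  set mp := nY (π p.1) tp with hmp
  set mq := nY (π q.1) (q.2 + v q.1) with hmq
  refine ⟨mq + N - mp, ?_, ?_⟩
  · rw [hN1, pow_comp, pow_comp]
    congr 1
    ring
  · have h1 := coc_add S h (π p.1) N mq
    rw [← hN1] at h1
    have h2 := coc_add S h (π p.1) mp (mq + N - mp)
    rw [show mp + (mq + N - mp) = N + mq by ring] at h2
    linarith
end
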